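/- For every integer n ≥ 1: d(n,0) = 0, and for every integer s > n, d(n,s) = a(n,s). (Equivalently: no positive normal form of affine length 0 contains a translate of G(w_n^I) or G(w_n^J), whereas every positive normal form of affine length s > n does.) -/

import Mathlib

/-- `w` is a positive normal form on `n`: a sequence of blocks `(l_i, r_i)` with
`n ≥ l_1 ≥ … ≥ l_k ≥ 0`, `n ≥ r_1 ≥ … ≥ r_k ≥ 0`, `l_i ≤ r_i` for all `i`,
where `l` may repeat (consecutively) only at the value `0` and `r` may repeat only
at the value `n`. -/
def IsPNF (n : ℤ) (w : List (ℤ × ℤ)) : Prop :=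
  (∀ p ∈ w, 0 ≤ p.1 ∧ p.1 ≤ p.2 ∧ p.2 ≤ n) ∧
  List.Chain' (fun p q : ℤ × ℤ =>
    q.1 ≤ p.1 ∧ q.2 ≤ p.2 ∧ (q.1 = p.1 → p.1 = 0) ∧ (q.2 = p.2 → p.2 = n)) w

/-- The affine length of a normal form: the number of blocks whose right endpoint is `n`. -/
def affineLength (n : ℤ) (w : List (ℤ × ℤ)) : ℕ :=
  w.countP (fun p => p.2 = n)

/-- `numPNF n s` is the number `a(n,s)` of positive normal forms on `n` of affine length `s`. -/
noncomputable def numPNF (n : ℤ) (s : ℕ) : ℕ :=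
  Nat.card {w : List (ℤ × ℤ) // IsPNF n w ∧ affineLength n w = s}

/-- The grid of a normal form `((l_1,r_1),…,(l_k,r_k))`:
`{(i,j) ∈ ℤ² : 1 ≤ i ≤ k, l_i ≤ j ≤ r_i}`. -/
def grid (w : List (ℤ × ℤ)) : Set (ℤ × ℤ) :=
  {p | ∃ i : ℕ, i < w.length ∧ p.1 = (i : ℤ) + 1 ∧
    (w.getD i (0, 0)).1 ≤ p.2 ∧ p.2 ≤ (w.getD i (0, 0)).2}

/-- `G` contains a horizontal translate of `G'`. -/
def ContainsTranslate (G G' : Set (ℤ × ℤ)) : Prop :=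
  ∃ m : ℤ, ∀ p ∈ G', ((p.1 + m, p.2) : ℤ × ℤ) ∈ G

/-- The normal form `w_n^I`. -/
def wI (n : ℤ) : List (ℤ × ℤ) :=
  if n = 1 then [(1, 1), (0, 1)]
  else if Even n then
    (n - 1, n) :: (((List.range ((n - 2) / 2).toNat).map
      fun t : ℕ => (n - 3 - 2 * (t : ℤ), n - 1 - 2 * (t : ℤ))) ++ [(0, 1)])
  else
    (n, n) :: (n - 2, n) :: (((List.range ((n - 3) / 2).toNat).map
      fun t : ℕ => (n - 4 - 2 * (t : ℤ), n - 2 - 2 * (t : ℤ))) ++ [(0, 1)])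

/-- The normal form `w_n^J`. -/
def wJ (n : ℤ) : List (ℤ × ℤ) :=
  if Even n then
    (n, n) :: (n - 2, n) :: (((List.range ((n - 2) / 2).toNat).map
      fun t : ℕ => (n - 4 - 2 * (t : ℤ), n - 2 - 2 * (t : ℤ))) ++ [(0, 0)])
  else
    (n - 1, n) :: (((List.range ((n - 1) / 2).toNat).map
      fun t : ℕ => (n - 3 - 2 * (t : ℤ), n - 1 - 2 * (t : ℤ))) ++ [(0, 0)])

/-- `numBadPNF n s` is the number `d(n,s)` of positive normal forms on `n` of affine
length `s` whose grid contains a horizontal translate of `G(w_n^I)` or of `G(w_n^J)`. -/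
noncomputable def numBadPNF (n : ℤ) (s : ℕ) : ℕ :=
  Nat.card {w : List (ℤ × ℤ) // IsPNF n w ∧ affineLength n w = s ∧
    (ContainsTranslate (grid w) (grid (wI n)) ∨ ContainsTranslate (grid w) (grid (wJ n)))}

/-!
In a positive normal form of affine length `s` the blocks with `r_i = n` are exactly the first `s`
ones, and the left ends decrease strictly until they reach `0`; hence the first `s` columns of the
grid contain the staircase whose column `x` runs from `max (n + 1 - x) 0` to `n`. For `s > n` this
staircase contains `G(w_n^I)` shifted right by `⌊n / 2⌋`. Conversely, the first columns of
`G(w_n^I)` and `G(w_n^J)` reach height `n`, and a grid point at height `n` lies in a block with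
`r_i = n`, so neither fits into a normal form of affine length `0`.
-/

def PNFStep (n : ℤ) (p q : ℤ × ℤ) : Prop :=
  q.1 ≤ p.1 ∧ q.2 ≤ p.2 ∧ (q.1 = p.1 → p.1 = 0) ∧ (q.2 = p.2 → p.2 = n)

theorem PNFStep.trans {n : ℤ} {a b c : ℤ × ℤ} (hab : PNFStep n a b) (hbc : PNFStep n b c) :
    PNFStep n a c := by
  obtain ⟨h1, h2, h3, h4⟩ := hab
  obtain ⟨g1, g2, -, -⟩ := hbc
  exact ⟨g1.trans h1, g2.trans h2, fun h => h3 (by omega), fun h => h4 (by omega)⟩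

def staircase (n s : ℤ) : Set (ℤ × ℤ) :=
  {p | 1 ≤ p.1 ∧ p.1 ≤ s ∧ 0 ≤ p.2 ∧ n + 1 - p.1 ≤ p.2 ∧ p.2 ≤ n}

namespace IsPNF

variable {n : ℤ} {w : List (ℤ × ℤ)}

theorem pairwise (h : IsPNF n w) : w.Pairwise (PNFStep n) :=
  have : Trans (PNFStep n) (PNFStep n) (PNFStep n) := ⟨PNFStep.trans⟩
  List.IsChain.pairwise h.2

theorem tail {p : ℤ × ℤ} (h : IsPNF n (p :: w)) : IsPNF n w :=
  ⟨fun q hq => h.1 q (List.mem_cons_of_mem p hq), h.2.tail⟩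

/-- Once `r_i < n`, the right ends decrease strictly. -/
theorem snd_eq_of_lt_affineLength (h : IsPNF n w) :
    ∀ i (hi : i < w.length), i < affineLength n w → w[i].2 = n := by
  induction w with
  | nil => simp
  | cons p w ih =>
    intro i hi hs
    rcases i with _ | i
    · by_contra hp
      simp only [List.getElem_cons_zero] at hp
      have hlt : ∀ q ∈ w, q.2 ≠ n := fun q hq => by
        obtain ⟨-, h2, -, h4⟩ := List.rel_of_pairwise_cons h.pairwise hq
        have := (h.1 p List.mem_cons_self).2.2
        omega
      rw [affineLength, List.countP_cons_of_neg (by simpa using hp), List.countP_pos_iff] at hs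
      obtain ⟨q, hq, hqn⟩ := hs
      exact hlt q hq (by simpa using hqn)
    · simp only [affineLength, List.countP_cons] at hs
      exact ih h.tail i (by simpa using hi) (by unfold affineLength; split_ifs at hs <;> omega)

theorem fst_le (h : IsPNF n w) : ∀ i (hi : i < w.length), w[i].1 ≤ max (n - i) 0 := by
  intro i
  induction i with
  | zero =>
    intro hi
    have := h.1 _ (List.getElem_mem hi)
    omega
  | succ i ih =>
    intro hi
    obtain ⟨h1, -, h3, -⟩ := h.2.getElem i hi
    have := ih (by omega)
    push_cast
    omega

theorem staircase_subset_grid (h : IsPNF n w) {s : ℤ} (hs : s ≤ affineLength n w) :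
    staircase n s ⊆ grid w := by
  rintro ⟨x, y⟩ ⟨hx1, hxs, hy0, hyl, hyn⟩
  obtain ⟨i, rfl⟩ : ∃ i : ℕ, x = i + 1 := ⟨(x - 1).toNat, by omega⟩
  have hlen : affineLength n w ≤ w.length := List.countP_le_length
  have hi : i < w.length := by omega
  have hl := h.fst_le i hi
  have hr := h.snd_eq_of_lt_affineLength i hi (by omega)
  refine ⟨i, hi, rfl, ?_, ?_⟩ <;> rw [List.getD_eq_getElem _ _ hi] <;> omega

end IsPNF

theorem pos_affineLength_of_mem_grid {n x : ℤ} {w : List (ℤ × ℤ)} (hw : ∀ p ∈ w, p.2 ≤ n)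
    (hx : (x, n) ∈ grid w) : 0 < affineLength n w := by
  obtain ⟨i, hi, -, -, hr⟩ := hx
  rw [List.getD_eq_getElem _ _ hi] at hr
  exact List.countP_pos_iff.mpr
    ⟨w[i], List.getElem_mem hi, by simpa using le_antisymm (hw _ (List.getElem_mem hi)) hr⟩

theorem one_mem_grid_cons {a b y : ℤ} (v : List (ℤ × ℤ)) (ha : a ≤ y) (hb : y ≤ b) :
    ((1 : ℤ), y) ∈ grid ((a, b) :: v) :=
  ⟨0, by simp, by simp, by simpa using ha, by simpa using hb⟩

theorem one_mem_grid_wI (n : ℤ) : ((1 : ℤ), n) ∈ grid (wI n) := by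
  unfold wI
  split_ifs <;> exact one_mem_grid_cons _ (by omega) (by omega)

theorem one_mem_grid_wJ (n : ℤ) : ((1 : ℤ), n) ∈ grid (wJ n) := by
  unfold wJ
  split_ifs <;> exact one_mem_grid_cons _ (by omega) (by omega)

theorem ContainsTranslate.exists_mem {G G' : Set (ℤ × ℤ)} (h : ContainsTranslate G G')
    {p : ℤ × ℤ} (hp : p ∈ G') : ∃ x, (x, p.2) ∈ G :=
  let ⟨m, hm⟩ := h
  ⟨p.1 + m, hm p hp⟩

/-- Column `j + 1` of `w_n^I` starts at or above `n - n / 2 - j`, so shifting by `n / 2` fits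
it into the staircase. -/
theorem translate_grid_wI_subset_staircase {n : ℤ} (hn : 1 ≤ n) :
    ∀ p ∈ grid (wI n), (p.1 + n / 2, p.2) ∈ staircase n (n + 1) := by
  rintro ⟨x, y⟩ ⟨j, hj, rfl, hl, hr⟩
  simp only [staircase, Set.mem_ofPred_eq]
  unfold wI at hj hl hr
  split_ifs at hj hl hr with h1 he
  · subst h1
    simp only [List.length_cons, List.length_nil] at hj
    interval_cases j <;> simp at hl hr <;> omega
  · obtain ⟨k, rfl⟩ := he
    obtain ⟨K, hK⟩ : ∃ K : ℕ, ((k + k - 2) / 2).toNat = K := ⟨_, rfl⟩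
    have hKk : (K : ℤ) = k - 1 := by omega
    rw [hK] at hj hl hr
    rcases j with _ | j
    · simp at hl hr; omega
    · have hjK : j ≤ K := by simp at hj; omega
      rcases hjK.lt_or_eq with hjK | rfl
      · simp [List.getD_eq_getElem?_getD, List.getElem?_append, hjK] at hl hr; omega
      · simp [List.getD_eq_getElem?_getD] at hl hr; omega
  · obtain ⟨k, rfl⟩ := Int.not_even_iff_odd.mp he
    obtain ⟨K, hK⟩ : ∃ K : ℕ, ((2 * k + 1 - 3) / 2).toNat = K := ⟨_, rfl⟩
    have hKk : (K : ℤ) = k - 1 := by omega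
    rw [hK] at hj hl hr
    rcases j with _ | _ | j
    · simp at hl hr; omega
    · simp at hl hr; omega
    · have hjK : j ≤ K := by simp at hj; omega
      rcases hjK.lt_or_eq with hjK | rfl
      · simp [List.getD_eq_getElem?_getD, List.getElem?_append, hjK] at hl hr; omega
      · simp [List.getD_eq_getElem?_getD] at hl hr; omega

/-- For every integer `n ≥ 1`: `d(n,0) = 0`, and `d(n,s) = a(n,s)` for every `s > n`. -/
theorem numBadPNF_extreme_cases (n : ℤ) (hn : 1 ≤ n) :
    numBadPNF n 0 = 0 ∧ ∀ s : ℕ, n < (s : ℤ) → numBadPNF n s = numPNF n s := by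
  constructor
  · refine Nat.card_eq_zero.mpr (Or.inl ⟨fun ⟨w, hw, h0, hc⟩ => ?_⟩)
    obtain ⟨x, hx⟩ : ∃ x, (x, n) ∈ grid w :=
      hc.elim (·.exists_mem (one_mem_grid_wI n)) (·.exists_mem (one_mem_grid_wJ n))
    exact (pos_affineLength_of_mem_grid (fun p hp => (hw.1 p hp).2.2) hx).ne' h0
  · intro s hs
    refine Nat.card_congr (Equiv.subtypeEquivRight fun w =>
      ⟨fun h => ⟨h.1, h.2.1⟩, fun ⟨hw, hsw⟩ => ⟨hw, hsw, Or.inl ⟨n / 2, fun p hp => ?_⟩⟩⟩)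
    exact hw.staircase_subset_grid (by omega) (translate_grid_wI_subset_staircase hn p hp)
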